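/- Lemma A.4 (norm of the whitened feature-reward vector). Let 𝒮 be a nonempty finite type, let d ≥ 1, let Φ be a real matrix with rows (φ_i)_{i∈𝒮} in ℝᵈ, and let μ : 𝒮 → ℝ be nonnegative with ∑_{i∈𝒮} μ_i = 1. Assume Σ_cov := Φᵀ·diag(μ)·Φ is positive definite. Let r ∈ ℝ^𝒮 satisfy |r_i| ≤ 1 for all i ∈ 𝒮, and set θ_{φ,r} := Φᵀ·diag(μ)·r. Then: (a) if there exists θ_r ∈ ℝᵈ with Φθ_r = r (reward realizability), then ‖Σ_cov^{−1/2}·θ_{φ,r}‖₂ ≤ 1; (b) in general, ‖Σ_cov^{−1/2}·θ_{φ,r}‖₂ ≤ √d. -/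

import Mathlib

/-!
Write `x := Σ⁻¹ θ` and `a := Φ x`. Since `Σ^{-1/2}` is symmetric,
`‖Σ^{-1/2} θ‖² = θ ⬝ Σ⁻¹ θ = ⟨r, a⟩_μ`, and `Σ x = θ` says that `a` is the `μ`-orthogonal
projection of `r` onto the column space of `Φ`, so `⟨r, a⟩_μ = ‖a‖²_μ ≤ ‖r‖²_μ ≤ 1 ≤ √d`.
-/

open scoped Matrix.Norms.L2Operator
open Matrix

section OldSqrt
open scoped ComplexOrder

/-- The square root of a positive semidefinite matrix, as defined in the older Mathlib
(`Matrix.PosSemidef.sqrt`), which has since been removed. -/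
noncomputable def Matrix.PosSemidef.sqrt {n 𝕜 : Type*} [Fintype n] [RCLike 𝕜] [DecidableEq n]
    {A : Matrix n n 𝕜} (hA : A.PosSemidef) : Matrix n n 𝕜 :=
  hA.1.eigenvectorUnitary.1 * diagonal ((↑) ∘ (√·) ∘ hA.1.eigenvalues) *
    (star hA.1.eigenvectorUnitary : Matrix n n 𝕜)

end OldSqrt

namespace Matrix.PosSemidef

open scoped ComplexOrder

variable {n 𝕜 : Type*} [Fintype n] [RCLike 𝕜] [DecidableEq n] {A : Matrix n n 𝕜}

theorem sqrt_mul_self (hA : A.PosSemidef) : hA.sqrt * hA.sqrt = A := by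
  set U : Matrix n n 𝕜 := hA.1.eigenvectorUnitary.1
  set D : Matrix n n 𝕜 := diagonal ((↑) ∘ (√·) ∘ hA.1.eigenvalues)
  have hU : star U * U = 1 := Unitary.coe_star_mul_self _
  have hD : D * D = diagonal (RCLike.ofReal ∘ hA.1.eigenvalues) := by
    rw [diagonal_mul_diagonal]
    congr 1
    funext i
    simp only [Function.comp_apply]
    rw [← RCLike.ofReal_mul, Real.mul_self_sqrt (hA.eigenvalues_nonneg i)]
  conv_rhs => rw [hA.1.spectral_theorem, Unitary.conjStarAlgAut_apply]
  calc hA.sqrt * hA.sqrt = U * D * (star U * U) * D * star U := by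
        simp only [sqrt, U, D, Matrix.mul_assoc]
    _ = _ := by rw [hU, Matrix.mul_one, Matrix.mul_assoc _ D D, hD]

theorem posSemidef_sqrt (hA : A.PosSemidef) : hA.sqrt.PosSemidef := by
  have hD : (diagonal ((↑) ∘ (√·) ∘ hA.1.eigenvalues : n → 𝕜)).PosSemidef :=
    posSemidef_diagonal_iff.2 fun i => by
      simpa only [Function.comp_apply] using RCLike.ofReal_nonneg.2 (Real.sqrt_nonneg _)
  simpa [sqrt, star_eq_conjTranspose] using hD.mul_mul_conjTranspose_same hA.1.eigenvectorUnitary.1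

end Matrix.PosSemidef

theorem Matrix.norm_toLp_inv_mulVec {n : Type*} [Fintype n] [DecidableEq n]
    {B : Matrix n n ℝ} (hB : Bᵀ = B) (v : n → ℝ) :
    ‖(WithLp.equiv 2 (n → ℝ)).symm (B⁻¹ *ᵥ v)‖ = √(v ⬝ᵥ ((B * B)⁻¹ *ᵥ v)) := by
  have hBinv : (B⁻¹)ᵀ = B⁻¹ := by rw [transpose_nonsing_inv, hB]
  have hsq : (B⁻¹ *ᵥ v) ⬝ᵥ (B⁻¹ *ᵥ v) = v ⬝ᵥ ((B * B)⁻¹ *ᵥ v) := by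
    rw [dotProduct_mulVec, ← mulVec_transpose, hBinv, mulVec_mulVec, ← mul_inv_rev,
      dotProduct_comm]
  rw [EuclideanSpace.norm_eq, ← hsq]
  simp [dotProduct, sq]

/-- Bessel's inequality for a vector `a` with `r - a ⟂ a` in the `μ`-weighted inner product. -/
theorem sum_weighted_mul_le_sum_weighted_sq {S : Type*} [Fintype S] {μ r a : S → ℝ}
    (hμ : ∀ i, 0 ≤ μ i) (horth : ∑ i, μ i * r i * a i = ∑ i, μ i * a i ^ 2) :
    ∑ i, μ i * r i * a i ≤ ∑ i, μ i * r i ^ 2 := by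
  have hdist : 0 ≤ ∑ i, μ i * (r i - a i) ^ 2 :=
    Finset.sum_nonneg fun i _ => mul_nonneg (hμ i) (sq_nonneg _)
  have hexpand : ∑ i, μ i * (r i - a i) ^ 2 =
      ∑ i, μ i * r i ^ 2 - 2 * ∑ i, μ i * r i * a i + ∑ i, μ i * a i ^ 2 := by
    simp only [Finset.mul_sum, ← Finset.sum_sub_distrib, ← Finset.sum_add_distrib]
    exact Finset.sum_congr rfl fun i _ => by ring
  linarith

theorem Matrix.dotProduct_inv_mulVec_le_sum_weighted_sq {S ι : Type*} [Fintype S]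
    [DecidableEq S] [Fintype ι] [DecidableEq ι] (Φ : Matrix S ι ℝ) {μ : S → ℝ}
    (hμ : ∀ i, 0 ≤ μ i) (r : S → ℝ) :
    ((Φᵀ * diagonal μ) *ᵥ r) ⬝ᵥ ((Φᵀ * diagonal μ * Φ)⁻¹ *ᵥ ((Φᵀ * diagonal μ) *ᵥ r)) ≤
      ∑ i, μ i * r i ^ 2 := by
  set G := Φᵀ * diagonal μ * Φ
  set θ := (Φᵀ * diagonal μ) *ᵥ r
  by_cases hG : IsUnit G.det
  swap
  · rw [nonsing_inv_apply_not_isUnit _ hG, zero_mulVec, dotProduct_zero]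
    exact Finset.sum_nonneg fun i _ => mul_nonneg (hμ i) (sq_nonneg _)
  set x := G⁻¹ *ᵥ θ
  have hweighted (u : S → ℝ) : ((Φᵀ * diagonal μ) *ᵥ u) ⬝ᵥ x = ∑ i, μ i * u i * (Φ *ᵥ x) i := by
    rw [← mulVec_mulVec, dotProduct_comm, dotProduct_mulVec, vecMul_transpose]
    simp only [dotProduct, mulVec_diagonal]
    exact Finset.sum_congr rfl fun i _ => by ring
  have hnormal : (Φᵀ * diagonal μ) *ᵥ (Φ *ᵥ x) = θ := by
    rw [mulVec_mulVec, mulVec_mulVec, mul_nonsing_inv _ hG, one_mulVec]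
  have horth : θ ⬝ᵥ x = ∑ i, μ i * (Φ *ᵥ x) i ^ 2 := by
    rw [← hnormal, hweighted]
    exact Finset.sum_congr rfl fun i _ => by ring
  calc θ ⬝ᵥ x = ∑ i, μ i * r i * (Φ *ᵥ x) i := hweighted r
    _ ≤ ∑ i, μ i * r i ^ 2 :=
      sum_weighted_mul_le_sum_weighted_sq hμ ((hweighted r).symm.trans horth)

theorem stmt_7_general {S : Type*} [Fintype S] [DecidableEq S]
    (d : ℕ) (hd : 1 ≤ d)
    (Φ : Matrix S (Fin d) ℝ) (μ : S → ℝ)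
    (hμ0 : ∀ i, 0 ≤ μ i) (hμ1 : ∑ i, μ i = 1)
    (Scov : Matrix (Fin d) (Fin d) ℝ)
    (hScov : Scov = Φᵀ * Matrix.diagonal μ * Φ)
    (hcov : Scov.PosDef)
    (r : S → ℝ) (hr : ∀ i, |r i| ≤ 1)
    (θφr : Fin d → ℝ) (hθφr : θφr = (Φᵀ * Matrix.diagonal μ) *ᵥ r) :
    ((∃ θr : Fin d → ℝ, Φ *ᵥ θr = r) →
        ‖(WithLp.equiv 2 (Fin d → ℝ)).symm (hcov.posSemidef.sqrt⁻¹ *ᵥ θφr)‖ ≤ 1) ∧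
      ‖(WithLp.equiv 2 (Fin d → ℝ)).symm (hcov.posSemidef.sqrt⁻¹ *ᵥ θφr)‖ ≤
        Real.sqrt d := by
  have hsymm : (hcov.posSemidef.sqrt)ᵀ = hcov.posSemidef.sqrt :=
    isHermitian_iff_isSymm.1 hcov.posSemidef.posSemidef_sqrt.1
  have hr2 : ∑ i, μ i * r i ^ 2 ≤ 1 := by
    rw [← hμ1]
    refine Finset.sum_le_sum fun i _ => mul_le_of_le_one_right (hμ0 i) ?_
    rw [← sq_abs]
    exact pow_le_one₀ (abs_nonneg _) (hr i)
  have hle : ‖(WithLp.equiv 2 (Fin d → ℝ)).symm (hcov.posSemidef.sqrt⁻¹ *ᵥ θφr)‖ ≤ 1 := by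
    rw [norm_toLp_inv_mulVec hsymm, hcov.posSemidef.sqrt_mul_self, hScov, hθφr, Real.sqrt_le_one]
    exact (dotProduct_inv_mulVec_le_sum_weighted_sq Φ hμ0 r).trans hr2
  exact ⟨fun _ => hle, hle.trans (Real.one_le_sqrt.2 (by exact_mod_cast hd))⟩

/-- Lemma A.4: norm of the whitened feature-reward vector.  Part (a): under
reward realizability `‖Σ_cov^{-1/2} θ_{φ,r}‖₂ ≤ 1`; part (b): in general
`‖Σ_cov^{-1/2} θ_{φ,r}‖₂ ≤ √d`. -/
theorem stmt_7 {S : Type*} [Fintype S] [DecidableEq S] [Nonempty S]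
    (d : ℕ) (hd : 1 ≤ d)
    (Φ : Matrix S (Fin d) ℝ) (μ : S → ℝ)
    (hμ0 : ∀ i, 0 ≤ μ i) (hμ1 : ∑ i, μ i = 1)
    (Scov : Matrix (Fin d) (Fin d) ℝ)
    (hScov : Scov = Φᵀ * Matrix.diagonal μ * Φ)
    (hcov : Scov.PosDef)
    (r : S → ℝ) (hr : ∀ i, |r i| ≤ 1)
    (θφr : Fin d → ℝ) (hθφr : θφr = (Φᵀ * Matrix.diagonal μ) *ᵥ r) :
    ((∃ θr : Fin d → ℝ, Φ *ᵥ θr = r) →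
        ‖(WithLp.equiv 2 (Fin d → ℝ)).symm (hcov.posSemidef.sqrt⁻¹ *ᵥ θφr)‖ ≤ 1) ∧
      ‖(WithLp.equiv 2 (Fin d → ℝ)).symm (hcov.posSemidef.sqrt⁻¹ *ᵥ θφr)‖ ≤
        Real.sqrt d :=
  stmt_7_general d hd Φ μ hμ0 hμ1 Scov hScov hcov r hr θφr hθφr
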